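/- arXiv:2209.07452 — 4 statements merged into one kernel-verified Lean document; each statement's English description precedes it below -/
import Mathlib

section
/- Let G = (√5+1)/2, let T : [0,1/2] → [0,1/2] be the folded NICF map T(x) = |1/x - ⌊1/x + 1/2⌋| (with T(0)=0), and let μ be the measure on [0,1/2] with density h(x)/(log G) where h(x) = 1/(G+x) + 1/(G+1-x). Then μ is T-invariant: μ(T⁻¹(E)) = μ(E) for every Borel set E ⊆ [0,1/2]. -/
open MeasureTheory

noncomputable def foldedNICF (x : ℝ) : ℝ :=
  if x = 0 then 0 else |1 / x - ⌊1 / x + 1 / 2⌋|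

noncomputable def nicfMeasure : Measure ℝ :=
  (volume.restrict (Set.Icc (0 : ℝ) (1 / 2))).withDensity
    (fun x => ENNReal.ofReal
      ((1 / ((Real.sqrt 5 + 1) / 2 + x) + 1 / ((Real.sqrt 5 + 1) / 2 + 1 - x)) /
        Real.log ((Real.sqrt 5 + 1) / 2)))

open Set Real Filter Function Topology goldenRatio

/-!
On `(0, 1/2]` the branches of `T` are the sets where `round (1/x) = n + 2`, so for
`0 ≤ a < 1/2` the set `T⁻¹[0, a] ∩ [0, 1/2]` is, up to `{0}`, the disjoint union of the intervals
`[1/(n+2+a), 1/(n+2-a)]` (cut at `1/2` for `n = 0`). The density `h` has the antiderivative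
`H x = log (φ + x) - log (φ + 1 - x)`, and `φ² = φ + 1` gives
`H (1/y) = log (y + φ - 1) - log (y + φ - 2) - log φ`. Hence the masses of the branch intervals
telescope, and their sum is `(H a - H 0) / log φ = μ [0, a]`. Two finite measures on `ℝ` with the
same distribution function agree, so `μ ∘ T⁻¹ = μ`.
-/

theorem Monotone.hasSum_sub_of_tendsto {f : ℕ → ℝ} {l : ℝ} (hf : Monotone f)
    (h : Tendsto f atTop (𝓝 l)) : HasSum (fun n => f (n + 1) - f n) (l - f 0) := by
  rw [hasSum_iff_tendsto_nat_of_nonneg fun n => sub_nonneg.2 (hf n.le_succ)]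
  simpa only [Finset.sum_range_sub] using h.sub_const (f 0)

theorem abs_sub_round_le_iff {α : Type*} [Field α] [LinearOrder α] [IsStrictOrderedRing α]
    [FloorRing α] {y a : α} (ha : a < 1 / 2) :
    |y - round y| ≤ a ↔ ∃ k : ℤ, |y - k| ≤ a := by
  refine ⟨fun h => ⟨round y, h⟩, fun ⟨k, hk⟩ => ?_⟩
  have hround : round y = k := by
    rw [round_eq_iff]
    rw [abs_le] at hk
    constructor <;> linarith
  rwa [hround]

theorem exists_int_abs_sub_le_iff_exists_nat {y a : ℝ} (hy : 2 ≤ y) (ha : a < 1 / 2) :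
    (∃ k : ℤ, |y - k| ≤ a) ↔ ∃ n : ℕ, |y - (n + 2)| ≤ a := by
  refine ⟨fun ⟨k, hk⟩ => ?_, fun ⟨n, hn⟩ => ⟨n + 2, by push_cast; exact hn⟩⟩
  have hk₁ : (1 : ℝ) < k := by linarith [(abs_le.1 hk).2]
  have hk₂ : 2 ≤ k := by
    have : (1 : ℤ) < k := by exact_mod_cast hk₁
    omega
  obtain ⟨n, hn⟩ := Int.eq_ofNat_of_zero_le (sub_nonneg.2 hk₂)
  refine ⟨n, ?_⟩
  have hkn : (k : ℝ) = n + 2 := by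
    rw [show k = n + 2 by omega]
    push_cast
    ring
  rwa [← hkn]

theorem sqrt_five_add_one_div_two : (√5 + 1) / 2 = φ := by
  rw [add_comm]

section Potential

noncomputable def nicfDensity (x : ℝ) : ℝ := 1 / (φ + x) + 1 / (φ + 1 - x)

noncomputable def nicfPotential (x : ℝ) : ℝ := log (φ + x) - log (φ + 1 - x)

variable {x u v : ℝ}

theorem nicfDensity_pos (h₁ : -φ < x) (h₂ : x < φ + 1) : 0 < nicfDensity x := by
  have : 0 < φ + x := by linarith
  have : 0 < φ + 1 - x := by linarith
  unfold nicfDensity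
  positivity

theorem continuousOn_nicfDensity : ContinuousOn nicfDensity (Ioo (-φ) (φ + 1)) := by
  refine ContinuousOn.add ?_ ?_ <;> refine continuousOn_const.div (by fun_prop) ?_ <;>
    intro x hx <;> linarith [hx.1, hx.2]

theorem hasDerivAt_nicfPotential (h₁ : -φ < x) (h₂ : x < φ + 1) :
    HasDerivAt nicfPotential (nicfDensity x) x := by
  have hl : HasDerivAt (fun y => log (φ + y)) (1 / (φ + x)) x := by
    simpa [one_div] using ((hasDerivAt_id' x).const_add φ).log (by linarith)
  have hr : HasDerivAt (fun y => log (φ + 1 - y)) (-(1 / (φ + 1 - x))) x := by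
    simpa [one_div, neg_div] using ((hasDerivAt_id' x).const_sub (φ + 1)).log (by linarith)
  rw [nicfDensity, ← sub_neg_eq_add]
  exact hl.sub hr

theorem integral_nicfDensity (hu : -φ < u) (huv : u ≤ v) (hv : v < φ + 1) :
    ∫ x in u..v, nicfDensity x = nicfPotential v - nicfPotential u := by
  have hsub : uIcc u v ⊆ Ioo (-φ) (φ + 1) := by
    rw [uIcc_of_le huv]
    exact Icc_subset_Ioo hu hv
  refine intervalIntegral.integral_eq_sub_of_hasDerivAt (fun x hx => ?_)
    ((continuousOn_nicfDensity.mono hsub).intervalIntegrable)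
  exact hasDerivAt_nicfPotential (hsub hx).1 (hsub hx).2

theorem nicfPotential_le (hu : -φ < u) (huv : u ≤ v) (hv : v < φ + 1) :
    nicfPotential u ≤ nicfPotential v := by
  have := log_le_log (by linarith : 0 < φ + u) (by linarith : φ + u ≤ φ + v)
  have := log_le_log (by linarith : 0 < φ + 1 - v) (by linarith : φ + 1 - v ≤ φ + 1 - u)
  unfold nicfPotential
  linarith

theorem nicfPotential_zero : nicfPotential 0 = -log φ := by
  rw [nicfPotential, add_zero, sub_zero, ← goldenRatio_sq, log_pow]
  push_cast
  ring

theorem nicfPotential_one_half : nicfPotential (1 / 2) = 0 := by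
  rw [nicfPotential]
  ring_nf

theorem nicfPotential_one_div {y : ℝ} (hy : 2 - φ < y) :
    nicfPotential (1 / y) = log (y + φ - 1) - log (y + φ - 2) - log φ := by
  have hφ := goldenRatio_lt_two
  have hy₀ : y ≠ 0 := by linarith
  have hy₁ : 0 < y + φ - 2 := by linarith
  have hy₂ : 0 < y + φ - 1 := by linarith
  have hl : φ + 1 / y = φ * (y + φ - 1) / y := by
    rw [eq_div_iff hy₀, add_mul, one_div_mul_cancel hy₀]
    linear_combination -goldenRatio_sq
  have hr : φ + 1 - 1 / y = φ ^ 2 * (y + φ - 2) / y := by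
    rw [eq_div_iff hy₀, sub_mul, one_div_mul_cancel hy₀]
    linear_combination (-(y + φ - 1)) * goldenRatio_sq
  rw [nicfPotential, hl, hr, log_div (by positivity) hy₀, log_div (by positivity) hy₀,
    log_mul goldenRatio_ne_zero hy₂.ne', log_mul (by positivity) hy₁.ne', log_pow]
  push_cast
  ring

end Potential

theorem nicfMeasure_apply {s : Set ℝ} (hs : MeasurableSet s) :
    nicfMeasure s = ∫⁻ x in s ∩ Icc 0 (1 / 2), ENNReal.ofReal (nicfDensity x / log φ) := by
  rw [nicfMeasure, withDensity_apply _ hs, Measure.restrict_restrict hs,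
    sqrt_five_add_one_div_two]
  rfl

theorem nicfMeasure_inter_Icc (s : Set ℝ) : nicfMeasure (s ∩ Icc 0 (1 / 2)) = nicfMeasure s := by
  refine measure_inter_conull ?_
  rw [nicfMeasure_apply measurableSet_Icc.compl, compl_inter_self, Measure.restrict_empty,
    lintegral_zero_measure]

theorem nicfMeasure_Icc {u v : ℝ} (hu : 0 ≤ u) (huv : u ≤ v) (hv : v ≤ 1 / 2) :
    nicfMeasure (Icc u v) = ENNReal.ofReal ((nicfPotential v - nicfPotential u) / log φ) := by
  have hφ := one_lt_goldenRatio
  have hsub : Icc u v ⊆ Ioo (-φ) (φ + 1) := Icc_subset_Ioo (by linarith) (by linarith)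
  rw [nicfMeasure_apply measurableSet_Icc, inter_eq_self_of_subset_left (Icc_subset_Icc hu hv),
    ← ofReal_integral_eq_lintegral_ofReal, integral_Icc_eq_integral_Ioc,
    ← intervalIntegral.integral_of_le huv, intervalIntegral.integral_div,
    integral_nicfDensity (by linarith) huv (by linarith)]
  · exact ((continuousOn_nicfDensity.mono hsub).div_const _).integrableOn_Icc
  · filter_upwards [ae_restrict_mem measurableSet_Icc] with x hx
    exact div_nonneg (nicfDensity_pos (hsub hx).1 (hsub hx).2).le (log_pos hφ).le

instance : IsFiniteMeasure nicfMeasure := by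
  refine ⟨?_⟩
  rw [← nicfMeasure_inter_Icc, univ_inter, nicfMeasure_Icc le_rfl (by norm_num) le_rfl]
  exact ENNReal.ofReal_lt_top

theorem nicfMeasure_singleton_zero : nicfMeasure {0} = 0 := by
  rw [← Icc_self, nicfMeasure_Icc le_rfl le_rfl (by norm_num), sub_self, zero_div,
    ENNReal.ofReal_zero]

section Branches

theorem foldedNICF_of_ne_zero {x : ℝ} (hx : x ≠ 0) : foldedNICF x = |x⁻¹ - round x⁻¹| := by
  rw [foldedNICF, if_neg hx, round_eq, one_div]

theorem foldedNICF_mem_Icc (x : ℝ) : foldedNICF x ∈ Icc 0 (1 / 2) := by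
  rcases eq_or_ne x 0 with rfl | hx
  · simp [foldedNICF]
  · rw [foldedNICF_of_ne_zero hx]
    exact ⟨abs_nonneg _, abs_sub_round _⟩

theorem measurable_foldedNICF : Measurable foldedNICF :=
  Measurable.ite (measurableSet_singleton 0) measurable_const (by measurability)

noncomputable def nicfBranch (a : ℝ) (n : ℕ) : Set ℝ :=
  Icc (1 / (n + 2 + a)) (min (1 / (n + 2 - a)) (1 / 2))

noncomputable def nicfBranchMass (a : ℝ) (n : ℕ) : ℝ :=
  nicfPotential (min (1 / (n + 2 - a)) (1 / 2)) - nicfPotential (1 / (n + 2 + a))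

variable {a : ℝ} (ha₀ : 0 ≤ a) (ha : a < 1 / 2)
include ha₀ ha

theorem mem_nicfBranch {x : ℝ} (n : ℕ) :
    x ∈ nicfBranch a n ↔ 0 < x ∧ x ≤ 1 / 2 ∧ |x⁻¹ - (n + 2)| ≤ a := by
  have hn : (0 : ℝ) ≤ n := n.cast_nonneg
  have hpos : 0 < (n : ℝ) + 2 + a := by linarith
  have hneg : 0 < (n : ℝ) + 2 - a := by linarith
  simp only [nicfBranch, mem_Icc, le_min_iff, abs_le, ← one_div]
  constructor
  · rintro ⟨hl, hr, h2⟩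
    have hx : 0 < x := (one_div_pos.2 hpos).trans_le hl
    exact ⟨hx, h2, by linarith [(le_one_div hx hneg).1 hr], by linarith [(one_div_le hpos hx).1 hl]⟩
  · rintro ⟨hx, h2, hl, hr⟩
    exact ⟨(one_div_le hpos hx).2 (by linarith), (le_one_div hx hneg).2 (by linarith), h2⟩

theorem pairwise_disjoint_nicfBranch : Pairwise (Disjoint on nicfBranch a) := by
  intro i j hij
  refine Set.disjoint_left.2 fun x hi hj => hij ?_
  obtain ⟨-, -, hi⟩ := (mem_nicfBranch ha₀ ha i).1 hi
  obtain ⟨-, -, hj⟩ := (mem_nicfBranch ha₀ ha j).1 hj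
  have hR : |(i : ℝ) - j| < 1 := by
    rw [abs_le] at hi hj
    rw [abs_lt]
    constructor <;> linarith
  have hZ : |(i : ℤ) - j| < 1 := by exact_mod_cast hR
  have := Int.abs_lt_one_iff.1 hZ
  omega

theorem foldedNICF_preimage_Iic_inter_Icc :
    foldedNICF ⁻¹' Iic a ∩ Icc 0 (1 / 2) = {0} ∪ ⋃ n, nicfBranch a n := by
  ext x
  rcases lt_trichotomy x 0 with hx | rfl | hx
  · have : ∀ n, x ∉ nicfBranch a n := fun n h =>
      (((mem_nicfBranch ha₀ ha n).1 h).1.trans hx).false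
    simp [hx.ne, hx.not_ge, this]
  · simp [foldedNICF, ha₀]
  · simp only [mem_inter_iff, mem_preimage, mem_Iic, mem_Icc, mem_union, mem_singleton_iff,
      mem_iUnion, mem_nicfBranch ha₀ ha, foldedNICF_of_ne_zero hx.ne', abs_sub_round_le_iff ha,
      hx.ne', hx.le, hx, true_and, false_or]
    rw [exists_and_left, and_comm]
    refine and_congr_right fun h2 => exists_int_abs_sub_le_iff_exists_nat ?_ ha
    rwa [le_inv_comm₀ two_pos hx, ← one_div]

theorem nicfBranch_left_le_right (n : ℕ) :
    1 / ((n : ℝ) + 2 + a) ≤ min (1 / (n + 2 - a)) (1 / 2) := by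
  have hn : (0 : ℝ) ≤ n := n.cast_nonneg
  exact le_min (one_div_le_one_div_of_le (by linarith) (by linarith))
    (one_div_le_one_div_of_le two_pos (by linarith))

theorem nicfMeasure_nicfBranch (n : ℕ) :
    nicfMeasure (nicfBranch a n) = ENNReal.ofReal (nicfBranchMass a n / log φ) :=
  nicfMeasure_Icc (by positivity) (nicfBranch_left_le_right ha₀ ha n) (min_le_right _ _)

theorem nicfBranchMass_nonneg (n : ℕ) : 0 ≤ nicfBranchMass a n := by
  have hφ := goldenRatio_pos
  refine sub_nonneg.2 (nicfPotential_le ?_ (nicfBranch_left_le_right ha₀ ha n) ?_)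
  · linarith [(by positivity : 0 < 1 / ((n : ℝ) + 2 + a))]
  · linarith [min_le_right (1 / ((n : ℝ) + 2 - a)) (1 / 2)]

theorem nicfBranchMass_zero :
    nicfBranchMass a 0 = nicfPotential a + log φ + (log (1 + φ - a) - log (1 + φ + a)) := by
  have hφ := goldenRatio_pos
  have hmin : min (1 / (2 - a)) (1 / 2) = 1 / 2 :=
    min_eq_right (one_div_le_one_div_of_le (by linarith) (by linarith))
  rw [nicfBranchMass, Nat.cast_zero, zero_add, hmin, nicfPotential_one_half,
    nicfPotential_one_div (by linarith), nicfPotential]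
  ring_nf

theorem nicfBranchMass_succ (n : ℕ) :
    nicfBranchMass a (n + 1) = (log (n + 2 + φ - a) - log (n + 2 + φ + a)) -
      (log (n + 1 + φ - a) - log (n + 1 + φ + a)) := by
  have hφ := one_lt_goldenRatio
  have hn : (0 : ℝ) ≤ n := n.cast_nonneg
  have hmin : min (1 / ((n : ℝ) + 1 + 2 - a)) (1 / 2) = 1 / (n + 1 + 2 - a) :=
    min_eq_left (one_div_le_one_div_of_le two_pos (by linarith))
  rw [nicfBranchMass, Nat.cast_succ, hmin, nicfPotential_one_div (by linarith),
    nicfPotential_one_div (by linarith)]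
  ring_nf

theorem hasSum_nicfBranchMass : HasSum (nicfBranchMass a) (nicfPotential a + log φ) := by
  set b : ℕ → ℝ := fun n => log (n + 1 + φ - a) - log (n + 1 + φ + a) with hb
  have hsucc (n : ℕ) : nicfBranchMass a (n + 1) = b (n + 1) - b n := by
    rw [nicfBranchMass_succ ha₀ ha, hb]
    push_cast
    ring_nf
  have hmono : Monotone b := monotone_nat_of_le_succ fun n =>
    sub_nonneg.1 (hsucc n ▸ nicfBranchMass_nonneg ha₀ ha (n + 1))
  have hlim : Tendsto b atTop (𝓝 0) := by
    refine ((tendsto_log_comp_add_sub_log (-(2 * a))).comp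
      (tendsto_atTop_add_const_right _ (1 + φ + a) tendsto_natCast_atTop_atTop)).congr
      fun n => ?_
    simp only [Function.comp_apply, hb]
    ring_nf
  have htail := hmono.hasSum_sub_of_tendsto hlim
  simp only [← hsucc] at htail
  convert htail.zero_add using 1
  rw [nicfBranchMass_zero ha₀ ha, hb]
  push_cast
  ring_nf

theorem nicfMeasure_foldedNICF_preimage_Iic_of_nonneg_of_lt :
    nicfMeasure (foldedNICF ⁻¹' Iic a) = nicfMeasure (Iic a) := by
  have hsum := (hasSum_nicfBranchMass ha₀ ha).div_const (log φ)
  have hIic : Iic a ∩ Icc 0 (1 / 2) = Icc 0 a := by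
    ext x
    simp only [mem_inter_iff, mem_Iic, mem_Icc]
    constructor
    · rintro ⟨hxa, hx₀, -⟩
      exact ⟨hx₀, hxa⟩
    · rintro ⟨hx₀, hxa⟩
      exact ⟨hxa, hx₀, by linarith⟩
  calc nicfMeasure (foldedNICF ⁻¹' Iic a)
      = nicfMeasure ({0} ∪ ⋃ n, nicfBranch a n) := by
        rw [← nicfMeasure_inter_Icc, foldedNICF_preimage_Iic_inter_Icc ha₀ ha]
    _ = nicfMeasure (⋃ n, nicfBranch a n) :=
        measure_congr (union_ae_eq_right_of_ae_eq_empty (ae_eq_empty.2 nicfMeasure_singleton_zero))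
    _ = ∑' n, ENNReal.ofReal (nicfBranchMass a n / log φ) := by
        rw [measure_iUnion (pairwise_disjoint_nicfBranch ha₀ ha) fun n => measurableSet_Icc]
        exact tsum_congr (nicfMeasure_nicfBranch ha₀ ha)
    _ = ENNReal.ofReal ((nicfPotential a - nicfPotential 0) / log φ) := by
        rw [← ENNReal.ofReal_tsum_of_nonneg (fun n => div_nonneg (nicfBranchMass_nonneg ha₀ ha n)
          (log_pos one_lt_goldenRatio).le) hsum.summable, hsum.tsum_eq, nicfPotential_zero,
          sub_neg_eq_add]
    _ = nicfMeasure (Iic a) := by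
        rw [← nicfMeasure_inter_Icc, hIic, nicfMeasure_Icc le_rfl ha₀ ha.le]

end Branches

theorem nicfMeasure_foldedNICF_preimage_Iic (a : ℝ) :
    nicfMeasure (foldedNICF ⁻¹' Iic a) = nicfMeasure (Iic a) := by
  rcases lt_or_ge a 0 with ha | ha₀
  · have hT : foldedNICF ⁻¹' Iic a = ∅ :=
      eq_empty_of_forall_notMem fun x hx => absurd ((foldedNICF_mem_Icc x).1.trans hx) ha.not_ge
    have hdisj : Disjoint (Iic a) (Icc (0 : ℝ) (1 / 2)) :=
      (Iic_disjoint_Ici.2 ha.not_ge).mono_right Icc_subset_Ici_self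
    rw [hT, ← nicfMeasure_inter_Icc (Iic a), disjoint_iff_inter_eq_empty.1 hdisj]
  rcases lt_or_ge a (1 / 2) with ha | ha
  · exact nicfMeasure_foldedNICF_preimage_Iic_of_nonneg_of_lt ha₀ ha
  · have hT : foldedNICF ⁻¹' Iic a = univ :=
      eq_univ_of_forall fun x => (foldedNICF_mem_Icc x).2.trans ha
    rw [hT, ← nicfMeasure_inter_Icc (Iic a), ← nicfMeasure_inter_Icc univ, univ_inter,
      inter_eq_right.2 (Icc_subset_Iic_self.trans (Iic_subset_Iic.2 ha))]

theorem measurePreserving_foldedNICF : MeasurePreserving foldedNICF nicfMeasure nicfMeasure :=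
  ⟨measurable_foldedNICF, Measure.ext_of_Iic _ _ fun a => by
    rw [Measure.map_apply measurable_foldedNICF measurableSet_Iic,
      nicfMeasure_foldedNICF_preimage_Iic]⟩

theorem nicfMeasure_invariant :
    ∀ E ⊆ Set.Icc (0 : ℝ) (1 / 2), MeasurableSet E →
      nicfMeasure (foldedNICF ⁻¹' E) = nicfMeasure E :=
  fun _ _ hE => measurePreserving_foldedNICF.measure_preimage hE.nullMeasurableSet
end

section
/- Let G = (√5+1)/2 and H(y) = (G+y)(G+1-y)/G³ on [0,1/2]. For (k,e) with k ≥ 2 an integer and e ∈ {±1}, define P_{(k,e)}(y) = H(y)(1/(k+G-2+ey) - 1/(k+G-1+ey)). Then for all y ∈ [0,1/2], (1-2y)/(4(G+y)(G+1-y)) + ((G+y)(G+1-y)/(4G³))·(1/(G+y)² + 1/(G+1-y)²) < 0.191. -/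
/-!
Put `a = G + y` and `b = G + 1 - y`. Then `1 - 2y = b - a` and, since `G² = G + 1`,
`a + b = 2G + 1 = G³`; for such `a, b` the expression collapses to `1/(2a) - 1/(2(a + b))`.
It is therefore largest at `y = 0`, where it equals `1/(2G) - 1/(2G³) = (3 - √5)/4 ≈ 0.19098`.
-/

open Real goldenRatio

lemma sub_div_add_mul_div_mul_inv_sq_add_inv_sq {a b : ℝ} (ha : a ≠ 0) (hb : b ≠ 0)
    (hab : a + b ≠ 0) :
    (b - a) / (4 * a * b) + a * b / (4 * (a + b)) * (1 / a ^ 2 + 1 / b ^ 2)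
      = 1 / (2 * a) - 1 / (2 * (a + b)) := by
  field_simp
  ring

namespace Real

lemma goldenRatio_pow_three : φ ^ 3 = 2 * φ + 1 := by
  linear_combination (φ + 1) * goldenRatio_sq

lemma one_div_two_mul_goldenRatio_sub_one_div_two_mul_goldenRatio_pow_three :
    1 / (2 * φ) - 1 / (2 * φ ^ 3) = (3 - √5) / 4 := by
  have hφ := goldenRatio_ne_zero
  field_simp
  linear_combination (√5 ^ 2 + 3) * sq_sqrt (show (0 : ℝ) ≤ 5 by norm_num)

lemma lt_sqrt_five : (2.236 : ℝ) < √5 :=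
  (lt_sqrt (by norm_num)).2 (by norm_num)

end Real

theorem S_II_bound (y : ℝ) (hy : y ∈ Set.Icc (0 : ℝ) (1 / 2)) :
    let G : ℝ := (Real.sqrt 5 + 1) / 2
    (1 - 2 * y) / (4 * (G + y) * (G + 1 - y))
      + (G + y) * (G + 1 - y) / (4 * G ^ 3)
        * (1 / (G + y) ^ 2 + 1 / (G + 1 - y) ^ 2) < 0.191 := by
  intro G
  obtain ⟨hy0, hy1⟩ := hy
  have hG : G = φ := by simp only [G, goldenRatio, add_comm]
  have ha : 0 < G + y := by linarith [hG ▸ goldenRatio_pos]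
  have hb : 0 < G + 1 - y := by linarith
  have hsum : (G + y) + (G + 1 - y) = G ^ 3 := by
    rw [hG, goldenRatio_pow_three]
    ring
  rw [show 1 - 2 * y = (G + 1 - y) - (G + y) by ring, ← hsum,
    sub_div_add_mul_div_mul_inv_sq_add_inv_sq ha.ne' hb.ne' (add_pos ha hb).ne', hsum]
  calc 1 / (2 * (G + y)) - 1 / (2 * G ^ 3)
      ≤ 1 / (2 * G) - 1 / (2 * G ^ 3) := by gcongr; linarith
    _ = (3 - √5) / 4 := hG ▸ one_div_two_mul_goldenRatio_sub_one_div_two_mul_goldenRatio_pow_three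
    _ < 0.191 := by linarith [lt_sqrt_five]
end

section
/- Let G = (√5+1)/2 and define for integers k ≥ 2 and x ∈ [0,1]: A_k(x) = (G+x)/(G(k+x)(k+x+G-1)) and B_k(x) = (G+x)/((G+1)(k+x)(k+x+G-2)). Then ∑_{k=2}^∞ (A_k(x) + B_k(x)) = 1 for every x ∈ [0,1]. -/
/-!
Since `1 / G = G - 1` and `1 / (G + 1) = 2 - G`, partial fractions give
`A_k + B_k = f (k - 2) - f (k - 1)` with `f n = (G + x) / (n + x + G)`. The series telescopes,
its terms are nonnegative because `f` is decreasing, and `f 0 = 1`, `f n → 0`.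
-/

open Filter Topology Finset Real goldenRatio

theorem div_add_div_eq_div_sub_div_of_sq_eq_add_one {K : Type*} [Field K] {g y : K} (c : K)
    (hg : g ^ 2 = g + 1) (hy : y ≠ 0) (hy₁ : y + g - 1 ≠ 0) (hy₂ : y + g - 2 ≠ 0) :
    c / (g * y * (y + g - 1)) + c / ((g + 1) * y * (y + g - 2)) =
      c / (y + g - 2) - c / (y + g - 1) := by
  have hg₀ : g ≠ 0 := by rintro rfl; norm_num at hg
  have hg₁ : g + 1 ≠ 0 := by rw [← hg]; exact pow_ne_zero 2 hg₀
  field_simp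
  linear_combination c * (2 - y) * hg

theorem Antitone.hasSum_sub_succ {f : ℕ → ℝ} (hf : Antitone f) {l : ℝ}
    (hl : Tendsto f atTop (𝓝 l)) : HasSum (fun n ↦ f n - f (n + 1)) (f 0 - l) := by
  rw [hasSum_iff_tendsto_nat_of_nonneg fun n ↦ sub_nonneg.2 (hf n.le_succ)]
  simp_rw [sum_range_sub']
  exact tendsto_const_nhds.sub hl

theorem sum_Ak_Bk_eq_one (x : ℝ) (hx : x ∈ Set.Icc (0 : ℝ) 1) :
    let G : ℝ := (Real.sqrt 5 + 1) / 2
    let A : ℕ → ℝ := fun k => (G + x) / (G * (k + x) * (k + x + G - 1))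
    let B : ℕ → ℝ := fun k => (G + x) / ((G + 1) * (k + x) * (k + x + G - 2))
    HasSum (fun k : ℕ => A (k + 2) + B (k + 2)) 1 := by
  intro G A B
  have hG : G = φ := by rw [goldenRatio, add_comm]
  have hGsq : G ^ 2 = G + 1 := hG ▸ goldenRatio_sq
  have hG₁ : 1 < G := hG ▸ one_lt_goldenRatio
  have hx₀ := hx.1
  let f : ℕ → ℝ := fun n ↦ (G + x) / (n + x + G)
  have hterm (k : ℕ) : A (k + 2) + B (k + 2) = f k - f (k + 1) := by
    have hk := k.cast_nonneg (α := ℝ)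
    have key := div_add_div_eq_div_sub_div_of_sq_eq_add_one (G + x) hGsq (y := k + 2 + x)
      (by linarith) (by linarith) (by linarith)
    simp only [A, B, f]
    push_cast
    convert key using 3 <;> ring
  have hanti : Antitone f := antitone_nat_of_succ_le fun n ↦ by
    have hn := n.cast_nonneg (α := ℝ)
    exact div_le_div_of_nonneg_left (by linarith) (by linarith) (by push_cast; linarith)
  have hlim : Tendsto f atTop (𝓝 0) :=
    tendsto_const_nhds.div_atTop <| tendsto_atTop_add_const_right _ _ <|
      tendsto_atTop_add_const_right _ _ tendsto_natCast_atTop_atTop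
  have hf0 : f 0 = 1 := by
    simp only [f, Nat.cast_zero, zero_add, add_comm x G]
    exact div_self (by linarith)
  simpa [hterm, hf0] using hanti.hasSum_sub_succ hlim
end

section
/- Let G = (√5+1)/2 and define k(x) = (1/log G)·(1/(2+x) + 1/(2-x)) for x ∈ [0, g²) and k(x) = (1/log G)·1/(2+x) for x ∈ [g², g], where g = G - 1. Then ∫₀^g k(x) dx = 1, i.e., dν = k(x)dx is a probability measure on [0,g]. -/
/-!
With `g = φ - 1` one has `g² = 2 - φ`, so `k` is `(log φ)⁻¹` times `1 / (2 + x)` on `[0, g]` plus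
`1 / (2 - x)` on `[0, g²)`. Hence `∫₀^g k = (log ((2 + g) / 2) + log (2 / (2 - g²))) / log φ`, and
`2 + g = φ²`, `2 - g² = φ` make the product of the two arguments equal to `φ`.
-/

open MeasureTheory Set Real intervalIntegral goldenRatio

theorem integral_one_div_const_add {c a b : ℝ} (ha : 0 < c + a) (hb : 0 < c + b) :
    ∫ x in a..b, 1 / (c + x) = log ((c + b) / (c + a)) := by
  rw [integral_comp_add_left (fun x => 1 / x), integral_one_div (notMem_uIcc_of_lt ha hb)]

theorem integral_one_div_const_sub {c a b : ℝ} (ha : 0 < c - a) (hb : 0 < c - b) :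
    ∫ x in a..b, 1 / (c - x) = log ((c - a) / (c - b)) := by
  rw [integral_comp_sub_left (fun x => 1 / x), integral_one_div (notMem_uIcc_of_lt hb ha)]

theorem intervalIntegrable_one_div_const_add {c a b : ℝ} (ha : 0 < c + a) (hb : 0 < c + b) :
    IntervalIntegrable (fun x => 1 / (c + x)) volume a b :=
  intervalIntegrable_one_div (fun x hx => by rcases inf_le_iff.mp hx.1 with h | h <;> linarith)
    (by fun_prop)

theorem intervalIntegrable_one_div_const_sub {c a b : ℝ} (ha : 0 < c - a) (hb : 0 < c - b) :
    IntervalIntegrable (fun x => 1 / (c - x)) volume a b :=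
  intervalIntegrable_one_div (fun x hx => by rcases le_sup_iff.mp hx.2 with h | h <;> linarith)
    (by fun_prop)

theorem integral_ite_lt_add {f h : ℝ → ℝ} {a m b : ℝ} (ham : a ≤ m) (hmb : m ≤ b)
    (hf : IntervalIntegrable f volume a b) (hh : IntervalIntegrable h volume a m) :
    ∫ x in a..b, (if x < m then f x + h x else f x) = (∫ x in a..b, f x) + ∫ x in a..m, h x := by
  have hite : (fun x => if x < m then f x + h x else f x) =
      fun x => f x + (Iio m).indicator h x := by
    ext x
    by_cases hx : x < m <;> simp [hx]
  have hind : IntervalIntegrable ((Iio m).indicator h) volume a b := by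
    rw [intervalIntegrable_iff_integrableOn_Ioc_of_le (ham.trans hmb),
      integrableOn_indicator_iff measurableSet_Iio]
    exact ((intervalIntegrable_iff_integrableOn_Ioc_of_le ham).mp hh).mono_set
      fun x hx => ⟨hx.2.1, hx.1.le⟩
  have hdom : Ioc a b ∩ Iio m = Ioo a m := by
    ext x
    simp only [mem_inter_iff, mem_Ioc, mem_Iio, mem_Ioo]
    exact ⟨fun hx => ⟨hx.1.1, hx.2⟩, fun hx => ⟨⟨hx.1, (hx.2.trans_le hmb).le⟩, hx.2⟩⟩
  rw [hite, integral_add hf hind, integral_of_le (ham.trans hmb), integral_of_le (ham.trans hmb),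
    integral_of_le ham, setIntegral_indicator measurableSet_Iio, hdom,
    integral_Ioc_eq_integral_Ioo (x := a) (y := m)]

theorem goldenRatio_sub_one_sq : (φ - 1) ^ 2 = 2 - φ := by
  linear_combination goldenRatio_sq

theorem hurwitz_density_integral_eq_one :
    let G : ℝ := (Real.sqrt 5 + 1) / 2
    let g : ℝ := (Real.sqrt 5 - 1) / 2
    let k : ℝ → ℝ := fun x =>
      if x < g ^ 2 then (1 / Real.log G) * (1 / (2 + x) + 1 / (2 - x))
      else (1 / Real.log G) * (1 / (2 + x))
    ∫ x in (0 : ℝ)..g, k x = 1 := by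
  intro G g k
  have hG : G = φ := by simp only [G, goldenRatio]; ring
  have hg : g = φ - 1 := by simp only [g, goldenRatio]; ring
  have hg_sq : g ^ 2 = 2 - φ := hg ▸ goldenRatio_sub_one_sq
  have hφ_gt := one_lt_goldenRatio
  have hφ_lt := goldenRatio_lt_two
  have hg_sq_le : 2 - φ ≤ φ - 1 := by nlinarith [goldenRatio_sub_one_sq]
  have hratio : φ ^ 2 / 2 * (2 / φ) = φ := by field_simp
  simp only [k, ← mul_ite]
  rw [hG, hg_sq, hg, intervalIntegral.integral_const_mul,
    integral_ite_lt_add (by linarith) hg_sq_le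
      (intervalIntegrable_one_div_const_add (by norm_num) (by linarith))
      (intervalIntegrable_one_div_const_sub (by norm_num) (by linarith)),
    integral_one_div_const_add (by norm_num) (by linarith),
    integral_one_div_const_sub (by norm_num) (by linarith), add_zero, sub_zero, sub_sub_cancel,
    show (2 : ℝ) + (φ - 1) = φ ^ 2 by rw [goldenRatio_sq]; ring,
    ← log_mul (by positivity) (by positivity), hratio, one_div_mul_cancel (log_pos hφ_gt).ne']
end
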